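/- Cluster-deletion update: let S = Σⱼ Dⱼᵀ Vⱼ⁻¹ Dⱼ = M and suppose M and M − M_i are invertible, where M_i = D_iᵀ V_i⁻¹ D_i. Then (M − M_i)⁻¹ D_iᵀ V_i⁻¹ = M⁻¹ D_iᵀ V_i⁻¹ (I − H_i)⁻¹, where H_i = D_i M⁻¹ D_iᵀ V_i⁻¹ and I − H_i is invertible. -/

import Mathlib

/-!
Push-through identity: writing `A = Dᵢᵀ Vᵢ⁻¹` and `B = Dᵢ`, so that `Mᵢ = A B` and `Hᵢ = B M⁻¹ A`,
one has `A (1 - B M⁻¹ A) = (M - A B) M⁻¹ A`; multiplying by `(M - A B)⁻¹` on the left and by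
`(1 - Hᵢ)⁻¹` on the right gives the update formula. By the Weinstein–Aronszajn identity
`det (M - A B) = det M · det (1 - B M⁻¹ A)`, so `M - Mᵢ` is invertible exactly when `1 - Hᵢ` is.
-/

namespace Matrix

variable {m n R : Type*} [Fintype m] [Fintype n] [DecidableEq m] [DecidableEq n] [CommRing R]
  {M : Matrix m m R} (A : Matrix m n R) (B : Matrix n m R)

theorem det_sub_mul (hM : IsUnit M.det) :
    (M - A * B).det = M.det * (1 - B * M⁻¹ * A).det := by
  simpa [sub_eq_add_neg, Matrix.mul_neg] using det_add_mul (-A) B hM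

theorem isUnit_det_sub_mul_iff (hM : IsUnit M.det) :
    IsUnit (M - A * B).det ↔ IsUnit (1 - B * M⁻¹ * A).det := by
  rw [det_sub_mul A B hM, IsUnit.mul_iff]
  exact and_iff_right hM

theorem mul_one_sub_mul_inv_mul (hM : IsUnit M.det) :
    A * (1 - B * M⁻¹ * A) = (M - A * B) * (M⁻¹ * A) := by
  rw [Matrix.mul_sub, Matrix.sub_mul, Matrix.mul_one, mul_nonsing_inv_cancel_left _ _ hM]
  simp only [Matrix.mul_assoc]

/-- If `M - A B` is singular then so is `1 - B M⁻¹ A`, and both sides are `0`,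
the junk value of `⁻¹` at singular matrices. -/
theorem inv_sub_mul_mul (hM : IsUnit M.det) :
    (M - A * B)⁻¹ * A = M⁻¹ * A * (1 - B * M⁻¹ * A)⁻¹ := by
  by_cases h : IsUnit (1 - B * M⁻¹ * A).det
  · have hMAB := (isUnit_det_sub_mul_iff A B hM).2 h
    calc (M - A * B)⁻¹ * A
        = (M - A * B)⁻¹ * (A * (1 - B * M⁻¹ * A)) * (1 - B * M⁻¹ * A)⁻¹ := by
          rw [← Matrix.mul_assoc, mul_nonsing_inv_cancel_right _ _ h]
      _ = M⁻¹ * A * (1 - B * M⁻¹ * A)⁻¹ := by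
          rw [mul_one_sub_mul_inv_mul A B hM, nonsing_inv_mul_cancel_left _ _ hMAB]
  · have hMAB := mt (isUnit_det_sub_mul_iff A B hM).1 h
    rw [nonsing_inv_apply_not_isUnit _ h, nonsing_inv_apply_not_isUnit _ hMAB,
      Matrix.zero_mul, Matrix.mul_zero]

end Matrix

open Matrix

theorem cluster_deletion_update_general {N p : ℕ} (n : Fin N → ℕ)
    (D : ∀ j, Matrix (Fin (n j)) (Fin p) ℝ)
    (V : ∀ j, Matrix (Fin (n j)) (Fin (n j)) ℝ)
    (Mi : Fin N → Matrix (Fin p) (Fin p) ℝ)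
    (hMi : ∀ j, Mi j = (D j)ᵀ * (V j)⁻¹ * (D j))
    (M : Matrix (Fin p) (Fin p) ℝ)
    (hMinv : IsUnit M.det)
    (i : Fin N)
    (Hi : Matrix (Fin (n i)) (Fin (n i)) ℝ)
    (hHi : Hi = D i * M⁻¹ * (D i)ᵀ * (V i)⁻¹) :
    (M - Mi i)⁻¹ * (D i)ᵀ * (V i)⁻¹ = M⁻¹ * (D i)ᵀ * (V i)⁻¹ * (1 - Hi)⁻¹ := by
  rw [hMi i, hHi]
  simpa only [Matrix.mul_assoc] using inv_sub_mul_mul ((D i)ᵀ * (V i)⁻¹) (D i) hMinv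

theorem cluster_deletion_update {N p : ℕ} (n : Fin N → ℕ)
    (D : ∀ j, Matrix (Fin (n j)) (Fin p) ℝ)
    (V : ∀ j, Matrix (Fin (n j)) (Fin (n j)) ℝ)
    (hV : ∀ j, IsUnit (V j).det)
    (Mi : Fin N → Matrix (Fin p) (Fin p) ℝ)
    (hMi : ∀ j, Mi j = (D j)ᵀ * (V j)⁻¹ * (D j))
    (M : Matrix (Fin p) (Fin p) ℝ) (hM : M = ∑ j, Mi j)
    (hMinv : IsUnit M.det)
    (i : Fin N)
    (hMMi : IsUnit (M - Mi i).det)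
    (Hi : Matrix (Fin (n i)) (Fin (n i)) ℝ)
    (hHi : Hi = D i * M⁻¹ * (D i)ᵀ * (V i)⁻¹)
    (hIH : IsUnit (1 - Hi).det) :
    (M - Mi i)⁻¹ * (D i)ᵀ * (V i)⁻¹ = M⁻¹ * (D i)ᵀ * (V i)⁻¹ * (1 - Hi)⁻¹ :=
  cluster_deletion_update_general n D V Mi hMi M hMinv i Hi hHi
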